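/- arXiv:2602.01607 — 3 statements merged into one kernel-verified Lean document; each statement's English description precedes it below -/
import Mathlib

section
/- Let P and Q be probability measures on a common measurable space (Ω, F), and suppose there exist ξ ≥ 0 and τ ≥ 0 such that for every measurable set S ∈ F, P(S) ≤ e^ξ·Q(S) + τ and Q(S) ≤ e^ξ·P(S) + τ. Then TV(P,Q) := sup_{S ∈ F} |P(S) − Q(S)| ≤ tanh(ξ/2) + 2τ/(e^ξ + 1). -/
open scoped ENNReal
open MeasureTheory

noncomputable section

/-- The cube `[-1,1]^d`. -/
def cube (d : ℕ) : Set (Fin d → ℝ) := Set.univ.pi fun _ => Set.Icc (-1 : ℝ) 1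

/-- Two datasets differ in at most one entry. -/
def Adjacent {n : ℕ} {Ω : Type*} (X X' : Fin n → Ω) : Prop :=
  ∃ i₀ : Fin n, ∀ i, i ≠ i₀ → X i = X' i

/-- Partial derivative in the `i`-th coordinate direction. -/
def pderiv' {d : ℕ} (i : Fin d) (f : (Fin d → ℝ) → ℝ) : (Fin d → ℝ) → ℝ :=
  fun x => fderiv ℝ f x (Pi.single i 1)

/-- Multi-index partial derivative `∂^α`. -/
def mderiv {d : ℕ} (α : Fin d → ℕ) (f : (Fin d → ℝ) → ℝ) : (Fin d → ℝ) → ℝ :=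
  (List.finRange d).foldr (fun i g => (pderiv' i)^[α i] g) f

/-- Order `|α| = Σ αᵢ` of a multi-index. -/
def mdeg {d : ℕ} (α : Fin d → ℕ) : ℕ := ∑ i, α i

/-- The `k`-smooth class `F_k` on `[-1,1]^d`: `C^k` functions all of whose partial
derivatives of order between `1` and `k` are bounded by `1` on the cube. -/
def memFk (d k : ℕ) (f : (Fin d → ℝ) → ℝ) : Prop :=
  ContDiff ℝ k f ∧
  ∀ α : Fin d → ℕ, 1 ≤ mdeg α → mdeg α ≤ k → ∀ x ∈ cube d, |mderiv α f x| ≤ 1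

/-- The integral probability metric `d_k` associated with `F_k`. -/
def dIPM (d k : ℕ) (p q : Measure (Fin d → ℝ)) : ℝ :=
  ⨆ f : {f : (Fin d → ℝ) → ℝ // memFk d k f}, |(∫ x, f.1 x ∂p) - ∫ x, f.1 x ∂q|

/-- Empirical measure of a dataset. -/
def empMeasure {d n : ℕ} (X : Fin n → (Fin d → ℝ)) : Measure (Fin d → ℝ) :=
  (n : ℝ≥0∞)⁻¹ • ∑ i, Measure.dirac (X i)

/-- Empirical measure of a finite tuple encoded as (length, sequence). -/
def empOut {d : ℕ} (y : ℕ × (ℕ → Fin d → ℝ)) : Measure (Fin d → ℝ) :=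
  (y.1 : ℝ≥0∞)⁻¹ • ∑ i ∈ Finset.range y.1, Measure.dirac (y.2 i)

/-- Total variation distance between two measures. -/
def tvDist {α : Type*} [MeasurableSpace α] (P Q : Measure α) : ℝ :=
  ⨆ S : {S : Set α // MeasurableSet S}, |(P S.1).toReal - (Q S.1).toReal|

/-- Normalized one-dimensional Chebyshev polynomial. -/
def TbarN (n : ℕ) (x : ℝ) : ℝ :=
  if n = 0 then 1 else Real.sqrt 2 * Real.cos (n * Real.arccos x)

/-- Normalized multivariate Chebyshev polynomial `T̄_K`. -/
def TbarK {d : ℕ} (K : Fin d → ℕ) (x : Fin d → ℝ) : ℝ := ∏ i, TbarN (K i) (x i)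

/-- Normalized cosine functions `ψ_n`. -/
def psiN (n : ℕ) (t : ℝ) : ℝ := if n = 0 then 1 else Real.sqrt 2 * Real.cos (n * t)

/-- Multivariate cosine basis `ψ_K`. -/
def psiK {d : ℕ} (K : Fin d → ℕ) (θ : Fin d → ℝ) : ℝ := ∏ i, psiN (K i) (θ i)

/-- Chebyshev weight probability measure `dμ(x) = dx/(π√(1-x²))` on `[-1,1]`. -/
def chebMeasure : Measure ℝ :=
  (volume.restrict (Set.Icc (-1 : ℝ) 1)).withDensity
    fun x => ENNReal.ofReal (1 / (Real.pi * Real.sqrt (1 - x ^ 2)))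

/-- Product Chebyshev measure `μ_d` on `[-1,1]^d`. -/
def chebMeasureD (d : ℕ) : Measure (Fin d → ℝ) := Measure.pi fun _ => chebMeasure

/-- Normalized Lebesgue measure `π⁻¹ dθ` on `[0,π]`. -/
def thetaMeasure : Measure ℝ :=
  ENNReal.ofReal (1 / Real.pi) • volume.restrict (Set.Icc (0 : ℝ) Real.pi)

/-- Product measure `π^{-d} dθ` on `[0,π]^d`. -/
def thetaMeasureD (d : ℕ) : Measure (Fin d → ℝ) := Measure.pi fun _ => thetaMeasure

/-- `‖K‖₂` for a multi-index `K`. -/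
def normK {d : ℕ} (K : Fin d → ℕ) : ℝ := Real.sqrt (∑ i, ((K i : ℝ)) ^ 2)

/-- `P` is a trigonometric polynomial of degree at most `D` in each of the `d` variables. -/
def IsTrigPoly (d D : ℕ) (P : (Fin d → ℝ) → ℝ) : Prop :=
  ∃ a : ((Fin d → ℕ) × (Fin d → Bool)) → ℝ,
    ∀ θ, P θ =
      ∑ p ∈ (Fintype.piFinset fun _ : Fin d => Finset.range (D + 1)) ×ˢ
          (Finset.univ : Finset (Fin d → Bool)),
        a p * ∏ i, (if p.2 i then Real.sin ((p.1 i : ℝ) * θ i) else Real.cos ((p.1 i : ℝ) * θ i))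

lemma Real.tanh_half_eq (x : ℝ) : Real.tanh (x / 2) = (Real.exp x - 1) / (Real.exp x + 1) := by
  have hx : Real.exp x = Real.exp (x / 2) ^ 2 := by rw [← Real.exp_nat_mul]; ring_nf
  rw [Real.tanh_eq, Real.exp_neg, hx]
  have := Real.exp_pos (x / 2)
  field_simp

lemma tvDist_le {Ω : Type*} [MeasurableSpace Ω] {P Q : Measure Ω} {c : ℝ}
    (h : ∀ S, MeasurableSet S → |P.real S - Q.real S| ≤ c) : tvDist P Q ≤ c :=
  have : Nonempty {S : Set Ω // MeasurableSet S} := ⟨⟨∅, .empty⟩⟩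
  ciSup_le fun S => h S.1 S.2

/-- Pairing the bound for `S` with the reverse bound for `Sᶜ` eliminates the unknown masses:
adding `p ≤ a q + τ` and `1 - q ≤ a (1 - p) + τ` gives `(a + 1)(p - q) ≤ a - 1 + 2τ`. -/
lemma measureReal_sub_le_of_approx_ratio {Ω : Type*} [MeasurableSpace Ω] {P Q : Measure Ω}
    [IsProbabilityMeasure P] [IsProbabilityMeasure Q] {a τ : ℝ} (ha : 0 ≤ a) {S : Set Ω}
    (hS : MeasurableSet S) (h : P.real S ≤ a * Q.real S + τ)
    (hc : Q.real Sᶜ ≤ a * P.real Sᶜ + τ) :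
    P.real S - Q.real S ≤ (a - 1) / (a + 1) + 2 * τ / (a + 1) := by
  rw [probReal_compl_eq_one_sub hS, probReal_compl_eq_one_sub hS] at hc
  rw [← add_div, le_div_iff₀ (by linarith)]
  linarith

theorem tv_bound_from_approx_likelihood_ratio_general
    {Ω : Type*} [MeasurableSpace Ω] (P Q : Measure Ω)
    [IsProbabilityMeasure P] [IsProbabilityMeasure Q]
    (ξ τ : ℝ)
    (h₁ : ∀ S : Set Ω, MeasurableSet S →
      (P S).toReal ≤ Real.exp ξ * (Q S).toReal + τ)
    (h₂ : ∀ S : Set Ω, MeasurableSet S →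
      (Q S).toReal ≤ Real.exp ξ * (P S).toReal + τ) :
    tvDist P Q ≤ Real.tanh (ξ / 2) + 2 * τ / (Real.exp ξ + 1) := by
  rw [Real.tanh_half_eq]
  refine tvDist_le fun S hS => abs_sub_le_iff.2 ⟨?_, ?_⟩
  · exact measureReal_sub_le_of_approx_ratio (Real.exp_pos ξ).le hS (h₁ S hS) (h₂ Sᶜ hS.compl)
  · exact measureReal_sub_le_of_approx_ratio (Real.exp_pos ξ).le hS (h₂ S hS) (h₁ Sᶜ hS.compl)

/-- total variation bound from an approximate likelihood-ratio condition:
if `P(S) ≤ e^ξ Q(S) + τ` and `Q(S) ≤ e^ξ P(S) + τ` for all measurable `S`, then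
`TV(P,Q) ≤ tanh(ξ/2) + 2τ/(e^ξ + 1)`. -/
theorem tv_bound_from_approx_likelihood_ratio
    {Ω : Type*} [MeasurableSpace Ω] (P Q : Measure Ω)
    [IsProbabilityMeasure P] [IsProbabilityMeasure Q]
    (ξ τ : ℝ) (hξ : 0 ≤ ξ) (hτ : 0 ≤ τ)
    (h₁ : ∀ S : Set Ω, MeasurableSet S →
      (P S).toReal ≤ Real.exp ξ * (Q S).toReal + τ)
    (h₂ : ∀ S : Set Ω, MeasurableSet S →
      (Q S).toReal ≤ Real.exp ξ * (P S).toReal + τ) :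
    tvDist P Q ≤ Real.tanh (ξ / 2) + 2 * τ / (Real.exp ξ + 1) :=
  tv_bound_from_approx_likelihood_ratio_general P Q ξ τ h₁ h₂

end
end

section
/- Let M be an (ε,δ)-differentially private mechanism on datasets in Ω^n with ε > 0, and let X, Y ∈ Ω^n be two fixed datasets with Hamming distance h := #{j : x_j ≠ y_j}. Let Q_X and Q_Y denote the output distributions of M(X) and M(Y). Then TV(Q_X, Q_Y) ≤ tanh(εh/2) · (1 + 2δ/(e^ε − 1)). -/
open scoped ENNReal
open MeasureTheory

noncomputable section

lemma tanh_formula (t : ℝ) :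
    Real.tanh t = (Real.exp (2 * t) - 1) / (Real.exp (2 * t) + 1) := by
  rw [Real.tanh_eq_sinh_div_cosh, Real.sinh_eq, Real.cosh_eq]
  have h1 : Real.exp (2 * t) = Real.exp t * Real.exp t := by
    rw [two_mul, Real.exp_add]
  have h2 : Real.exp t * Real.exp (-t) = 1 := by
    rw [← Real.exp_add]; simp
  have h3 : 0 < Real.exp t := Real.exp_pos t
  have h4 : 0 < Real.exp (-t) := Real.exp_pos (-t)
  rw [h1, div_eq_div_iff (by positivity) (by positivity)]
  nlinarith [h2]

/-- total variation distance between the outputs of an `(ε,δ)`-DP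
mechanism on two datasets at Hamming distance `h`. -/
theorem dp_tv_bound_at_hamming_distance
    {Ω 𝓩 : Type*} [MeasurableSpace 𝓩] [DecidableEq Ω] {n : ℕ}
    (M : (Fin n → Ω) → Measure 𝓩) (ε δ : ℝ) (hε : 0 < ε) (hδ : 0 ≤ δ)
    (hprob : ∀ X, IsProbabilityMeasure (M X))
    (hDP : ∀ X X' : Fin n → Ω, Adjacent X X' → ∀ S : Set 𝓩, MeasurableSet S →
      M X S ≤ ENNReal.ofReal (Real.exp ε) * M X' S + ENNReal.ofReal δ)
    (X Y : Fin n → Ω) (h : ℕ)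
    (hh : (Finset.univ.filter fun j => X j ≠ Y j).card = h) :
    tvDist (M X) (M Y) ≤ Real.tanh (ε * h / 2) * (1 + 2 * δ / (Real.exp ε - 1)) := by
  classical
  set c := Real.exp ε with hc
  have hc1 : 1 < c := by
    rw [hc, ← Real.exp_zero]
    exact Real.exp_lt_exp.mpr hε
  have hc0 : 0 < c := lt_trans one_pos hc1
  -- real-valued version of the DP hypothesis
  have dpReal : ∀ X X' : Fin n → Ω, Adjacent X X' → ∀ S : Set 𝓩, MeasurableSet S →
      (M X S).toReal ≤ c * (M X' S).toReal + δ := by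
    intro X X' hadj S hS
    haveI := hprob X; haveI := hprob X'
    have h1 := hDP X X' hadj S hS
    have hfin : ENNReal.ofReal c * M X' S + ENNReal.ofReal δ ≠ ⊤ := by
      refine ENNReal.add_ne_top.mpr ⟨?_, ENNReal.ofReal_ne_top⟩
      exact ENNReal.mul_ne_top ENNReal.ofReal_ne_top (measure_ne_top _ _)
    calc (M X S).toReal ≤ (ENNReal.ofReal c * M X' S + ENNReal.ofReal δ).toReal :=
          ENNReal.toReal_mono hfin h1
      _ = c * (M X' S).toReal + δ := by
          have hm : ENNReal.ofReal c * M X' S ≠ ⊤ :=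
            ENNReal.mul_ne_top ENNReal.ofReal_ne_top (measure_ne_top _ _)
          rw [ENNReal.toReal_add hm ENNReal.ofReal_ne_top, ENNReal.toReal_mul,
            ENNReal.toReal_ofReal hc0.le, ENNReal.toReal_ofReal hδ]
  -- group privacy by induction on the Hamming distance
  have grp : ∀ (m : ℕ) (X Y : Fin n → Ω),
      (Finset.univ.filter fun j => X j ≠ Y j).card = m → ∀ S : Set 𝓩, MeasurableSet S →
      (M X S).toReal ≤ c ^ m * (M Y S).toReal + δ * (c ^ m - 1) / (c - 1) := by
    intro m
    induction m with
    | zero =>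
      intro X Y hcard S hS
      have hf : (Finset.univ.filter fun j => X j ≠ Y j) = ∅ := Finset.card_eq_zero.mp hcard
      have hXY : X = Y := by
        funext j
        by_contra hne
        have : j ∈ (Finset.univ.filter fun j => X j ≠ Y j) := by
          simp [hne]
        simp [hf] at this
      simp [hXY]
    | succ m ih =>
      intro X Y hcard S hS
      have hpos : 0 < (Finset.univ.filter fun j => X j ≠ Y j).card := by omega
      obtain ⟨j₀, hj₀⟩ := Finset.card_pos.mp hpos
      set X' : Fin n → Ω := Function.update X j₀ (Y j₀) with hX'
      have hadj : Adjacent X X' :=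
        ⟨j₀, fun i hi => (Function.update_of_ne hi _ _).symm⟩
      have hset : (Finset.univ.filter fun j => X' j ≠ Y j)
          = (Finset.univ.filter fun j => X j ≠ Y j).erase j₀ := by
        ext i
        rcases eq_or_ne i j₀ with rfl | hij
        · simp [hX', Function.update_self]
        · simp [hX', Function.update_of_ne hij, hij]
      have hcard' : (Finset.univ.filter fun j => X' j ≠ Y j).card = m := by
        rw [hset, Finset.card_erase_of_mem hj₀, hcard]
        omega
      have h1 := dpReal X X' hadj S hS
      have h2 := ih X' Y hcard' S hS
      have h3 : c * (M X' S).toReal ≤ c * (c ^ m * (M Y S).toReal + δ * (c ^ m - 1) / (c - 1)) :=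
        mul_le_mul_of_nonneg_left h2 hc0.le
      have heq : c * (c ^ m * (M Y S).toReal + δ * (c ^ m - 1) / (c - 1)) + δ
          = c ^ (m + 1) * (M Y S).toReal + δ * (c ^ (m + 1) - 1) / (c - 1) := by
        have hcm1 : c - 1 ≠ 0 := by nlinarith
        field_simp
        ring
      linarith [h1, h3, heq.le]
  -- abbreviations
  set A : ℝ := c ^ h with hA
  set D : ℝ := δ * (A - 1) / (c - 1) with hD
  have hA1 : 1 ≤ A := by rw [hA]; exact one_le_pow₀ hc1.le
  have hcard' : (Finset.univ.filter fun j => Y j ≠ X j).card = h := by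
    rw [← hh]; congr 1; ext j; simp [ne_comm]
  -- key elementary inequality
  have key : ∀ a b : ℝ, a ≤ A * b + D → 1 - b ≤ A * (1 - a) + D →
      a - b ≤ (A - 1 + 2 * D) / (A + 1) := by
    intro a b k1 k2
    rw [le_div_iff₀ (by linarith : (0 : ℝ) < A + 1)]
    nlinarith [k1, k2]
  -- the bound equals the stated RHS
  have htanh : Real.tanh (ε * h / 2) = (A - 1) / (A + 1) := by
    rw [tanh_formula]
    have h2 : 2 * (ε * h / 2) = (h : ℕ) * ε := by push_cast; ring
    rw [h2, Real.exp_nat_mul]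
  have hBeq : (A - 1 + 2 * D) / (A + 1) = Real.tanh (ε * h / 2) * (1 + 2 * δ / (c - 1)) := by
    rw [htanh, hD]
    have hA1' : A + 1 ≠ 0 := by nlinarith
    have hcm1 : c - 1 ≠ 0 := by nlinarith
    field_simp
  -- conclude via the supremum
  haveI : Nonempty {S : Set 𝓩 // MeasurableSet S} := ⟨⟨∅, MeasurableSet.empty⟩⟩
  rw [tvDist]
  refine ciSup_le fun S => ?_
  obtain ⟨S, hS⟩ := S
  haveI := hprob X; haveI := hprob Y
  set p : ℝ := (M X S).toReal with hp
  set q : ℝ := (M Y S).toReal with hq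
  have cpX : (M X Sᶜ).toReal = 1 - p := by
    rw [prob_compl_eq_one_sub hS, ENNReal.toReal_sub_of_le prob_le_one ENNReal.one_ne_top]
    simp [hp]
  have cpY : (M Y Sᶜ).toReal = 1 - q := by
    rw [prob_compl_eq_one_sub hS, ENNReal.toReal_sub_of_le prob_le_one ENNReal.one_ne_top]
    simp [hq]
  have e1 : p ≤ A * q + D := grp h X Y hh S hS
  have e2 : 1 - q ≤ A * (1 - p) + D := by
    have := grp h Y X hcard' Sᶜ hS.compl
    rwa [cpX, cpY] at this
  have e3 : q ≤ A * p + D := grp h Y X hcard' S hS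
  have e4 : 1 - p ≤ A * (1 - q) + D := by
    have := grp h X Y hh Sᶜ hS.compl
    rwa [cpX, cpY] at this
  have b1 : p - q ≤ (A - 1 + 2 * D) / (A + 1) := key p q e1 e2
  have b2 : q - p ≤ (A - 1 + 2 * D) / (A + 1) := key q p e3 e4
  rw [← hBeq]
  exact abs_sub_le_iff.mpr ⟨b1, b2⟩

end
end

section
/- Fix k ∈ ℕ and f ∈ C^k([-1,1]^d), and let g(θ) := f(cos θ₁, …, cos θ_d). For every multi-index α ∈ ℕ^d with |α| ≤ k there exist trigonometric polynomials P_{α,β}(θ), indexed by multi-indices β with 0 ≤ β ≤ α coordinate-wise, each of degree at most |α| in every variable θ_i, such that ∂_θ^α g(θ) = Σ_{0 ≤ β ≤ α} P_{α,β}(θ) · (∂_x^β f)(cos θ) for all θ ∈ [0,π]^d, and sup_{θ ∈ [0,π]^d} |P_{α,β}(θ)| ≤ |α|! for all 0 ≤ β ≤ α. -/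
open scoped ENNReal
open MeasureTheory

noncomputable section

/-!
Write `∂^α (f ∘ cos) = ∑_{β ≤ α} P_{α,β} · (∂^β f) ∘ cos` and induct on `|α|`, one derivative
`∂ᵢ` at a time: the product and chain rules give the recursion
`P_{α+eᵢ,γ} = ∂ᵢ P_{α,γ} - sin θᵢ · P_{α,γ-eᵢ}`.
Along the induction, control the `ℓ¹`-norm of the coefficients of `P_{α,β}` in the basis of
products of `sin (n θⱼ)` and `cos (n θⱼ)`, which dominates its sup norm. For a trigonometric
polynomial of degree `m`, `∂ᵢ` multiplies this norm by at most `m`, while multiplication by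
`sin θᵢ` raises the degree by one without increasing the norm (product-to-sum formulas).
Hence the norm grows from `m!` to at most `m · m! + m! = (m + 1)!`.
-/

open Finset Function

variable {d : ℕ}

lemma List.foldr_iterate_update_succ {ι X : Type*} [DecidableEq ι] (T : ι → X → X)
    (n : ι → ℕ) (x : X) {pre post : List ι} {i : ι} (hpre : ∀ j ∈ pre, j ≠ i ∧ n j = 0)
    (hpost : i ∉ post) :
    (pre ++ i :: post).foldr (fun j y => (T j)^[update n i (n i + 1) j] y) x =
      T i ((pre ++ i :: post).foldr (fun j y => (T j)^[n j] y) x) := by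
  have foldr_pre : ∀ m : ι → ℕ, (∀ j ∈ pre, m j = 0) →
      ∀ y, pre.foldr (fun j y => (T j)^[m j] y) y = y := by
    intro m hm y
    clear hpre
    induction pre with
    | nil => rfl
    | cons j pre ih => simp [hm j (by simp), ih fun j' hj' => hm j' (by simp [hj'])]
  have foldr_post : post.foldr (fun j y => (T j)^[update n i (n i + 1) j] y) x =
      post.foldr (fun j y => (T j)^[n j] y) x := by
    induction post with
    | nil => rfl
    | cons j post ih =>
      simp only [List.mem_cons, not_or] at hpost
      simp [update_of_ne (Ne.symm hpost.1), ih hpost.2]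
  rw [List.foldr_append, List.foldr_append,
    foldr_pre _ fun j hj => (update_of_ne (hpre j hj).1 _ _).trans (hpre j hj).2,
    foldr_pre _ fun j hj => (hpre j hj).2, List.foldr_cons, List.foldr_cons, foldr_post,
    update_self, iterate_succ_apply']

lemma update_add_one_eq_add_single {ι : Type*} [DecidableEq ι] (β : ι → ℕ) (i : ι) :
    update β i (β i + 1) = β + Pi.single i 1 := by
  ext j
  by_cases hj : j = i
  · subst hj; simp
  · simp [hj]

lemma mderiv_add_single (β : Fin d → ℕ) (i : Fin d) (hβ : ∀ j < i, β j = 0)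
    (F : (Fin d → ℝ) → ℝ) :
    mderiv (β + Pi.single i 1) F = pderiv' i (mderiv β F) := by
  obtain ⟨pre, post, hsplit⟩ := List.mem_iff_append.1 (List.mem_finRange i)
  have hsorted := List.pairwise_lt_finRange d
  rw [hsplit, List.pairwise_append, List.pairwise_cons] at hsorted
  obtain ⟨-, ⟨hi_lt, -⟩, hpre_lt⟩ := hsorted
  have hpre : ∀ j ∈ pre, j ≠ i ∧ β j = 0 := fun j hj =>
    have hji := hpre_lt j hj i List.mem_cons_self
    ⟨hji.ne, hβ j hji⟩
  rw [mderiv, mderiv, hsplit, ← update_add_one_eq_add_single]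
  exact List.foldr_iterate_update_succ pderiv' β F hpre fun h => (hi_lt i h).false

@[simp] lemma mderiv_zero (F : (Fin d → ℝ) → ℝ) : mderiv 0 F = F := by
  simp only [mderiv, Pi.zero_apply, iterate_zero, id_eq]
  induction List.finRange d <;> simp [*]

lemma mdeg_add_single (β : Fin d → ℕ) (i : Fin d) : mdeg (β + Pi.single i 1) = mdeg β + 1 := by
  simp [mdeg, sum_add_distrib]

lemma mdeg_mono : Monotone (mdeg : (Fin d → ℕ) → ℕ) := fun _ _ h =>
  sum_le_sum fun j _ => h j

lemma mdeg_eq_zero {α : Fin d → ℕ} : mdeg α = 0 ↔ α = 0 := by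
  simp [mdeg, sum_eq_zero_iff, funext_iff]

/-- Induction on multi-indices that peels off the first nonzero coordinate, which is the
derivative applied last in `mderiv`. -/
@[elab_as_elim]
lemma mderiv_induction {motive : (Fin d → ℕ) → Prop} (zero : motive 0)
    (add_single : ∀ (i : Fin d) (β : Fin d → ℕ),
      (∀ γ ≤ β, ∀ F, mderiv (γ + Pi.single i 1) F = pderiv' i (mderiv γ F)) →
      motive β → motive (β + Pi.single i 1))
    (α : Fin d → ℕ) : motive α := by
  induction hm : mdeg α generalizing α with
  | zero => rwa [mdeg_eq_zero.1 hm]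
  | succ m ih =>
    obtain ⟨j₀, hj₀⟩ := ne_iff.1 fun h : α = 0 => by simp [mdeg_eq_zero.2 h] at hm
    obtain ⟨i, hi, hmin⟩ := wellFounded_lt.has_min {j | α j ≠ 0} ⟨j₀, hj₀⟩
    have hα : α - Pi.single i 1 + Pi.single i 1 = α :=
      tsub_add_cancel_of_le fun j => by
        by_cases hj : j = i
        · subst hj; simpa [Nat.one_le_iff_ne_zero] using hi
        · simp [hj]
    rw [← hα] at hm ⊢
    refine add_single i _ (fun γ hγ F => mderiv_add_single γ i (fun j hj => ?_) F) (ih _ ?_)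
    · have hαj : α j = 0 := not_not.1 fun h => hmin j h hj
      simpa [hj.ne, hαj] using hγ j
    · rw [mdeg_add_single] at hm; omega

lemma ContDiff.pderiv' {F : (Fin d → ℝ) → ℝ} {n : ℕ} (i : Fin d) (hF : ContDiff ℝ (n + 1) F) :
    ContDiff ℝ n (pderiv' i F) :=
  (hF.fderiv_right (by norm_cast)).clm_apply contDiff_const

lemma contDiff_mderiv {k : ℕ} {f : (Fin d → ℝ) → ℝ} (hf : ContDiff ℝ k f) (α : Fin d → ℕ)
    {n : ℕ} (h : mdeg α + n ≤ k) : ContDiff ℝ n (mderiv α f) := by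
  induction α using mderiv_induction generalizing n with
  | zero =>
    rw [mdeg_eq_zero.2 rfl, zero_add] at h
    simpa using hf.of_le (by exact_mod_cast h)
  | add_single i β hpeel ih =>
    rw [mdeg_add_single] at h
    rw [hpeel β le_rfl]
    exact (ih (n := n + 1) (by omega)).pderiv' i

lemma le_of_le_add_single {ι : Type*} [DecidableEq ι] {β γ : ι → ℕ} {i : ι}
    (h : γ ≤ β + Pi.single i 1) (hi : γ i ≤ β i) : γ ≤ β := fun j => by
  by_cases hj : j = i
  · exact hj ▸ hi
  · simpa [hj] using h j

lemma sum_Iic_add_single {ι M : Type*} [Fintype ι] [DecidableEq ι] [AddCommGroup M]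
    (β : ι → ℕ) (i : ι) (F G : (ι → ℕ) → M) :
    ∑ γ ∈ Iic (β + Pi.single i 1),
        ((if γ i ≤ β i then F γ else 0) - if 0 < γ i then G γ else 0) =
      ∑ γ ∈ Iic β, (F γ - G (γ + Pi.single i 1)) := by
  have hle : (Iic (β + Pi.single i 1)).filter (· i ≤ β i) = Iic β := by
    ext γ
    simp only [mem_filter, mem_Iic]
    exact ⟨fun ⟨h, hi⟩ => le_of_le_add_single h hi, fun h => ⟨h.trans le_self_add, h i⟩⟩
  have hshift : (Iic (β + Pi.single i 1)).filter (0 < · i) =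
      (Iic β).map (addRightEmbedding (Pi.single i 1)) := by
    rw [show Iic β = Icc 0 β by ext; simp, map_add_right_Icc, zero_add]
    ext γ
    simp only [mem_filter, mem_Iic, mem_Icc]
    refine ⟨fun ⟨h, hi⟩ => ⟨fun j => ?_, h⟩, fun ⟨hi, h⟩ => ⟨h, (by simpa using hi i : 1 ≤ γ i)⟩⟩
    by_cases hj : j = i
    · subst hj; simpa using Nat.one_le_of_lt hi
    · simp [hj]
  rw [sum_sub_distrib, sum_sub_distrib, ← sum_filter, ← sum_filter, hle, hshift, sum_map]
  rfl

lemma DifferentiableAt.hasDerivAt_pderiv' {F : (Fin d → ℝ) → ℝ} {x : Fin d → ℝ} (i : Fin d)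
    (hF : DifferentiableAt ℝ F x) :
    HasDerivAt (fun t => F (update x i t)) (pderiv' i F x) (x i) :=
  hF.hasFDerivAt.comp_hasDerivAt_of_eq (x i) (hasDerivAt_update x i (x i))
    (update_eq_self i x).symm

lemma pderiv'_eq_of_hasDerivAt_update {F : (Fin d → ℝ) → ℝ} {x : Fin d → ℝ} {i : Fin d}
    {D : ℝ} (hF : DifferentiableAt ℝ F x) (hD : HasDerivAt (fun t => F (update x i t)) D (x i)) :
    pderiv' i F x = D :=
  (hF.hasDerivAt_pderiv' i).unique hD

lemma pderiv'_sum {ι : Type*} {s : Finset ι} {F : ι → (Fin d → ℝ) → ℝ} {x : Fin d → ℝ}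
    (i : Fin d) (hF : ∀ j ∈ s, DifferentiableAt ℝ (F j) x) :
    pderiv' i (fun y => ∑ j ∈ s, F j y) x = ∑ j ∈ s, pderiv' i (F j) x := by
  simp [pderiv', fderiv_fun_sum hF]

lemma differentiable_cos_pi : Differentiable ℝ fun θ : Fin d → ℝ => fun j => Real.cos (θ j) :=
  differentiable_pi.2 fun j => Real.differentiable_cos.comp (differentiable_apply j)

lemma pderiv'_mul_comp_cos {P h : (Fin d → ℝ) → ℝ} {θ : Fin d → ℝ} (i : Fin d)
    (hP : DifferentiableAt ℝ P θ) (hh : DifferentiableAt ℝ h fun j => Real.cos (θ j)) :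
    pderiv' i (fun θ => P θ * h fun j => Real.cos (θ j)) θ =
      pderiv' i P θ * h (fun j => Real.cos (θ j)) -
        Real.sin (θ i) * P θ * pderiv' i h (fun j => Real.cos (θ j)) := by
  have hslice : HasDerivAt (fun t => h (update (fun j => Real.cos (θ j)) i (Real.cos t)))
      (pderiv' i h (fun j => Real.cos (θ j)) * -Real.sin (θ i)) (θ i) :=
    (hh.hasDerivAt_pderiv' i).comp (θ i) (Real.hasDerivAt_cos (θ i))
  refine pderiv'_eq_of_hasDerivAt_update
    (hP.mul (hh.comp θ differentiable_cos_pi.differentiableAt)) ?_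
  have hcos (t : ℝ) : update (fun j => Real.cos (θ j)) i (Real.cos t) =
      fun j => Real.cos (update θ i t j) := (comp_update Real.cos θ i t).symm
  simp only [hcos] at hslice
  refine ((hP.hasDerivAt_pderiv' i).fun_mul hslice).congr_deriv ?_
  rw [update_eq_self]
  ring

def trigAtom (n : ℕ) (b : Bool) (t : ℝ) : ℝ :=
  if b then Real.sin (n * t) else Real.cos (n * t)

def trigMonomial (p : (Fin d → ℕ) × (Fin d → Bool)) (θ : Fin d → ℝ) : ℝ :=
  ∏ j, trigAtom (p.1 j) (p.2 j) (θ j)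

def trigIndices (d D : ℕ) : Finset ((Fin d → ℕ) × (Fin d → Bool)) :=
  (Fintype.piFinset fun _ => range (D + 1)) ×ˢ univ

/-- `P` is a trigonometric polynomial of degree at most `D` in each variable whose
coefficients in the basis `trigMonomial` have `ℓ¹`-norm at most `C`. -/
def IsTrigPolyNormLE (D : ℕ) (C : ℝ) (P : (Fin d → ℝ) → ℝ) : Prop :=
  ∃ a : (Fin d → ℕ) × (Fin d → Bool) → ℝ,
    (∀ θ, P θ = ∑ p ∈ trigIndices d D, a p * trigMonomial p θ) ∧
      ∑ p ∈ trigIndices d D, |a p| ≤ C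

lemma mem_trigIndices {D : ℕ} {p : (Fin d → ℕ) × (Fin d → Bool)} :
    p ∈ trigIndices d D ↔ ∀ j, p.1 j ≤ D := by
  simp [trigIndices]

lemma abs_trigAtom_le_one (n : ℕ) (b : Bool) (t : ℝ) : |trigAtom n b t| ≤ 1 := by
  cases b
  · exact Real.abs_cos_le_one _
  · exact Real.abs_sin_le_one _

lemma hasDerivAt_trigAtom (n : ℕ) (b : Bool) (t : ℝ) :
    HasDerivAt (trigAtom n b) ((if b then (n : ℝ) else -n) * trigAtom n (!b) t) t := by
  have hlin : HasDerivAt (fun t : ℝ => n * t) n t := by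
    simpa using (hasDerivAt_id t).const_mul (n : ℝ)
  cases b
  · exact ((Real.hasDerivAt_cos _).comp t hlin).congr_deriv (by simp [trigAtom]; ring)
  · exact ((Real.hasDerivAt_sin _).comp t hlin).congr_deriv (by simp [trigAtom]; ring)

/-- Product-to-sum: `2 sin t cos (n t) = sin ((n + 1) t) - sin ((n - 1) t)` and
`2 sin t sin (n t) = cos ((n - 1) t) - cos ((n + 1) t)` for `n ≥ 1`. -/
lemma exists_sin_mul_trigAtom (n : ℕ) (b : Bool) :
    ∃ (c₁ c₂ : ℝ) (m₁ m₂ : ℕ) (b' : Bool), |c₁| + |c₂| ≤ 1 ∧ m₁ ≤ n + 1 ∧ m₂ ≤ n + 1 ∧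
      ∀ t, Real.sin t * trigAtom n b t = c₁ * trigAtom m₁ b' t + c₂ * trigAtom m₂ b' t := by
  cases n with
  | zero =>
    cases b
    · exact ⟨1, 0, 1, 0, true, by norm_num, le_rfl, by omega, fun t => by simp [trigAtom]⟩
    · exact ⟨0, 0, 0, 0, true, by norm_num, by omega, by omega, fun t => by simp [trigAtom]⟩
  | succ m =>
    have hhalf : |(1 / 2 : ℝ)| + |-(1 / 2)| ≤ 1 := by norm_num [abs_of_pos]
    have hup (t : ℝ) : ((m + 2 : ℕ) : ℝ) * t = (m + 1 : ℕ) * t + t := by push_cast; ring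
    have hdown (t : ℝ) : (m : ℝ) * t = (m + 1 : ℕ) * t - t := by push_cast; ring
    cases b
    · refine ⟨1 / 2, -(1 / 2), m + 2, m, true, hhalf, le_rfl, by omega, fun t => ?_⟩
      simp only [trigAtom, if_true, Bool.false_eq_true, if_false]
      rw [hup, hdown, Real.sin_add, Real.sin_sub]
      ring
    · refine ⟨1 / 2, -(1 / 2), m, m + 2, false, hhalf, by omega, le_rfl, fun t => ?_⟩
      simp only [trigAtom, if_true, Bool.false_eq_true, if_false]
      rw [hup, hdown, Real.cos_add, Real.cos_sub]
      ring

lemma trigMonomial_update (p : (Fin d → ℕ) × (Fin d → Bool)) (i : Fin d) (m : ℕ) (b : Bool)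
    (θ : Fin d → ℝ) (t : ℝ) :
    trigMonomial (update p.1 i m, update p.2 i b) (update θ i t) =
      trigAtom m b t * ∏ j ∈ univ.erase i, trigAtom (p.1 j) (p.2 j) (θ j) := by
  rw [trigMonomial, ← mul_prod_erase univ _ (mem_univ i)]
  simp only [update_self]
  congr 1
  refine prod_congr rfl fun j hj => ?_
  simp [update_of_ne (ne_of_mem_erase hj)]

lemma trigMonomial_eq_mul_prod_erase (p : (Fin d → ℕ) × (Fin d → Bool)) (i : Fin d)
    (θ : Fin d → ℝ) :
    trigMonomial p θ =
      trigAtom (p.1 i) (p.2 i) (θ i) * ∏ j ∈ univ.erase i, trigAtom (p.1 j) (p.2 j) (θ j) := by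
  simpa using trigMonomial_update p i (p.1 i) (p.2 i) θ (θ i)

lemma abs_trigMonomial_le_one (p : (Fin d → ℕ) × (Fin d → Bool)) (θ : Fin d → ℝ) :
    |trigMonomial p θ| ≤ 1 := by
  rw [trigMonomial, abs_prod]
  exact prod_le_one (fun _ _ => abs_nonneg _) fun j _ => abs_trigAtom_le_one _ _ _

@[fun_prop]
lemma differentiable_trigAtom (n : ℕ) (b : Bool) : Differentiable ℝ (trigAtom n b) :=
  fun t => (hasDerivAt_trigAtom n b t).differentiableAt

@[fun_prop]
lemma differentiable_trigMonomial (p : (Fin d → ℕ) × (Fin d → Bool)) :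
    Differentiable ℝ (trigMonomial p) := by
  unfold trigMonomial
  fun_prop

namespace IsTrigPolyNormLE

variable {D : ℕ} {C : ℝ} {P Q : (Fin d → ℝ) → ℝ}

lemma isTrigPoly (h : IsTrigPolyNormLE D C P) : IsTrigPoly d D P :=
  let ⟨a, hP, _⟩ := h
  ⟨a, hP⟩

lemma abs_le (h : IsTrigPolyNormLE D C P) (θ : Fin d → ℝ) : |P θ| ≤ C := by
  obtain ⟨a, hP, ha⟩ := h
  calc |P θ| ≤ ∑ p ∈ trigIndices d D, |a p * trigMonomial p θ| := hP θ ▸ abs_sum_le_sum_abs _ _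
    _ ≤ ∑ p ∈ trigIndices d D, |a p| := by
      refine sum_le_sum fun p _ => ?_
      rw [abs_mul]
      exact mul_le_of_le_one_right (abs_nonneg _) (abs_trigMonomial_le_one p θ)
    _ ≤ C := ha

lemma differentiable (h : IsTrigPolyNormLE D C P) : Differentiable ℝ P := by
  obtain ⟨a, hP, -⟩ := h
  rw [show P = _ from funext hP]
  fun_prop

lemma mono {D' : ℕ} {C' : ℝ} (h : IsTrigPolyNormLE D C P) (hD : D ≤ D') (hC : C ≤ C') :
    IsTrigPolyNormLE D' C' P := by
  obtain ⟨a, hP, ha⟩ := h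
  have hsub : trigIndices d D ⊆ trigIndices d D' := fun p hp =>
    mem_trigIndices.2 fun j => (mem_trigIndices.1 hp j).trans hD
  refine ⟨fun p => if p ∈ trigIndices d D then a p else 0, fun θ => ?_, ?_⟩
  · rw [hP θ, ← sum_subset hsub fun p _ hp => by simp [hp]]
    exact sum_congr rfl fun p hp => by simp [hp]
  · rw [← sum_subset hsub fun p _ hp => by simp [hp]]
    exact (sum_congr rfl fun p hp => by simp [hp]).trans_le (ha.trans hC)

lemma zero (hC : 0 ≤ C) : IsTrigPolyNormLE D C fun _ : Fin d → ℝ => 0 :=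
  ⟨0, fun θ => by simp, by simpa using hC⟩

lemma add {C' : ℝ} (hP : IsTrigPolyNormLE D C P) (hQ : IsTrigPolyNormLE D C' Q) :
    IsTrigPolyNormLE D (C + C') fun θ => P θ + Q θ := by
  obtain ⟨a, hP, ha⟩ := hP
  obtain ⟨b, hQ, hb⟩ := hQ
  refine ⟨a + b, fun θ => by simp [hP, hQ, add_mul, sum_add_distrib], ?_⟩
  calc ∑ p ∈ trigIndices d D, |(a + b) p| ≤ ∑ p ∈ trigIndices d D, (|a p| + |b p|) :=
        sum_le_sum fun p _ => abs_add_le _ _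
    _ ≤ C + C' := sum_add_distrib.trans_le (add_le_add ha hb)

lemma const_mul (c : ℝ) (h : IsTrigPolyNormLE D C P) :
    IsTrigPolyNormLE D (|c| * C) fun θ => c * P θ := by
  obtain ⟨a, hP, ha⟩ := h
  refine ⟨fun p => c * a p, fun θ => by simp [hP, mul_sum, mul_assoc], ?_⟩
  simpa [abs_mul, ← mul_sum] using mul_le_mul_of_nonneg_left ha (abs_nonneg c)

lemma sub {C' : ℝ} (hP : IsTrigPolyNormLE D C P) (hQ : IsTrigPolyNormLE D C' Q) :
    IsTrigPolyNormLE D (C + C') fun θ => P θ - Q θ := by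
  simpa [sub_eq_add_neg] using hP.add (hQ.const_mul (-1))

lemma sum {ι : Type*} (s : Finset ι) {C : ι → ℝ} {P : ι → (Fin d → ℝ) → ℝ}
    (h : ∀ j ∈ s, IsTrigPolyNormLE D (C j) (P j)) :
    IsTrigPolyNormLE D (∑ j ∈ s, C j) fun θ => ∑ j ∈ s, P j θ := by
  classical
  induction s using Finset.induction_on with
  | empty => simpa using zero (D := D) le_rfl
  | insert j s hj ih =>
    simp only [sum_insert hj]
    exact (h j (mem_insert_self j s)).add (ih fun j' hj' => h j' (mem_insert_of_mem hj'))

end IsTrigPolyNormLE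

lemma isTrigPolyNormLE_trigMonomial {D : ℕ} {p : (Fin d → ℕ) × (Fin d → Bool)}
    (hp : p ∈ trigIndices d D) : IsTrigPolyNormLE D 1 (trigMonomial p) := by
  refine ⟨Pi.single p 1, fun θ => ?_, ?_⟩
  · simp [Pi.single_apply, hp]
  · simp [Pi.single_apply, apply_ite (fun x : ℝ => |x|), hp]

lemma hasDerivAt_trigMonomial_update (p : (Fin d → ℕ) × (Fin d → Bool)) (i : Fin d)
    (θ : Fin d → ℝ) :
    HasDerivAt (fun t => trigMonomial p (update θ i t))
      ((if p.2 i then (p.1 i : ℝ) else -p.1 i) * trigMonomial (p.1, update p.2 i (!p.2 i)) θ)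
      (θ i) := by
  have hslice (t : ℝ) := trigMonomial_update p i (p.1 i) (p.2 i) θ t
  have hflip := trigMonomial_update p i (p.1 i) (!p.2 i) θ (θ i)
  simp only [update_eq_self] at hslice hflip
  simp only [hslice, hflip, ← mul_assoc]
  exact (hasDerivAt_trigAtom _ _ _).mul_const _

lemma IsTrigPolyNormLE.pderiv' {D : ℕ} {C : ℝ} {P : (Fin d → ℝ) → ℝ} (i : Fin d)
    (h : IsTrigPolyNormLE D C P) : IsTrigPolyNormLE D (D * C) (pderiv' i P) := by
  obtain ⟨a, hP, ha⟩ := h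
  set s : (Fin d → ℕ) × (Fin d → Bool) → ℝ := fun p => if p.2 i then (p.1 i : ℝ) else -p.1 i
  have hderiv : _root_.pderiv' i P = fun θ =>
      ∑ p ∈ trigIndices d D, (a p * s p) * trigMonomial (p.1, update p.2 i (!p.2 i)) θ := by
    rw [show P = _ from funext hP]
    ext θ
    refine pderiv'_eq_of_hasDerivAt_update (by fun_prop) ((HasDerivAt.fun_sum fun p _ =>
      (hasDerivAt_trigMonomial_update p i θ).const_mul (a p)).congr_deriv ?_)
    simp only [mul_assoc, s]
  rw [hderiv]
  refine (IsTrigPolyNormLE.sum _ fun p hp => (isTrigPolyNormLE_trigMonomial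
    (p := (p.1, update p.2 i (!p.2 i))) (mem_trigIndices.2 (mem_trigIndices.1 hp :))).const_mul
      (a p * s p)).mono le_rfl ?_
  refine (sum_le_sum fun p hp => ?_).trans
    ((mul_sum _ _ _).symm.trans_le (mul_le_mul_of_nonneg_left ha (Nat.cast_nonneg D)))
  have hs : |s p| ≤ D := by
    have : (p.1 i : ℝ) ≤ D := by exact_mod_cast mem_trigIndices.1 hp i
    unfold s; split_ifs <;> simpa
  rw [mul_one, abs_mul, mul_comm (D : ℝ)]
  exact mul_le_mul_of_nonneg_left hs (abs_nonneg _)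

lemma update_mem_trigIndices {D m : ℕ} {p : (Fin d → ℕ) × (Fin d → Bool)}
    (hp : p ∈ trigIndices d D) (i : Fin d) (hm : m ≤ D) (b : Fin d → Bool) :
    (update p.1 i m, b) ∈ trigIndices d D := by
  refine mem_trigIndices.2 fun j => ?_
  by_cases hj : j = i
  · subst hj; simpa
  · simpa [hj] using mem_trigIndices.1 hp j

lemma isTrigPolyNormLE_sin_mul_trigMonomial {D : ℕ} {p : (Fin d → ℕ) × (Fin d → Bool)}
    (hp : p ∈ trigIndices d D) (i : Fin d) :
    IsTrigPolyNormLE (D + 1) 1 fun θ => Real.sin (θ i) * trigMonomial p θ := by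
  obtain ⟨c₁, c₂, m₁, m₂, b, hc, hm₁, hm₂, hprod⟩ := exists_sin_mul_trigAtom (p.1 i) (p.2 i)
  have hp' : p ∈ trigIndices d (D + 1) :=
    mem_trigIndices.2 fun j => (mem_trigIndices.1 hp j).trans D.le_succ
  have hD : p.1 i + 1 ≤ D + 1 := Nat.succ_le_succ (mem_trigIndices.1 hp i)
  have hupdate (m : ℕ) (θ : Fin d → ℝ) :
      trigMonomial (update p.1 i m, update p.2 i b) θ =
        trigAtom m b (θ i) * ∏ j ∈ univ.erase i, trigAtom (p.1 j) (p.2 j) (θ j) := by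
    simpa using trigMonomial_update p i m b θ (θ i)
  have hsum := ((isTrigPolyNormLE_trigMonomial (update_mem_trigIndices hp' i (hm₁.trans hD)
    (update p.2 i b))).const_mul c₁).add ((isTrigPolyNormLE_trigMonomial
      (update_mem_trigIndices hp' i (hm₂.trans hD) (update p.2 i b))).const_mul c₂)
  convert hsum.mono le_rfl (by simpa using hc) using 1
  ext θ
  rw [hupdate, hupdate, trigMonomial_eq_mul_prod_erase p i, ← mul_assoc, hprod]
  ring

lemma IsTrigPolyNormLE.sin_mul {D : ℕ} {C : ℝ} {P : (Fin d → ℝ) → ℝ} (i : Fin d)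
    (h : IsTrigPolyNormLE D C P) : IsTrigPolyNormLE (D + 1) C fun θ => Real.sin (θ i) * P θ := by
  obtain ⟨a, hP, ha⟩ := h
  have hsum := IsTrigPolyNormLE.sum (trigIndices d D) fun p hp =>
    (isTrigPolyNormLE_sin_mul_trigMonomial hp i).const_mul (a p)
  convert hsum.mono le_rfl (by simpa using ha) using 1
  ext θ
  simp only [hP, mul_sum, mul_left_comm]

/-- The coefficients of `∂ᵢ ∂^β (f ∘ cos)` in terms of the coefficients `P` of `∂^β (f ∘ cos)`. -/
def nextCoeff (i : Fin d) (β : Fin d → ℕ) (P : (Fin d → ℕ) → (Fin d → ℝ) → ℝ)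
    (γ : Fin d → ℕ) (θ : Fin d → ℝ) : ℝ :=
  (if γ i ≤ β i then pderiv' i (P γ) θ else 0) -
    if 0 < γ i then Real.sin (θ i) * P (γ - Pi.single i 1) θ else 0

lemma isTrigPolyNormLE_nextCoeff {m : ℕ} {i : Fin d} {β γ : Fin d → ℕ}
    {P : (Fin d → ℕ) → (Fin d → ℝ) → ℝ} (hP : ∀ γ ≤ β, IsTrigPolyNormLE m m.factorial (P γ))
    (hγ : γ ≤ β + Pi.single i 1) :
    IsTrigPolyNormLE (m + 1) (m + 1).factorial (nextCoeff i β P γ) := by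
  have hderiv : IsTrigPolyNormLE (m + 1) (m * m.factorial)
      fun θ => if γ i ≤ β i then pderiv' i (P γ) θ else 0 := by
    split_ifs with hi
    · exact ((hP γ (le_of_le_add_single hγ hi)).pderiv' i).mono m.le_succ le_rfl
    · exact .zero (by positivity)
  have hsin : IsTrigPolyNormLE (m + 1) m.factorial
      fun θ => if 0 < γ i then Real.sin (θ i) * P (γ - Pi.single i 1) θ else 0 := by
    split_ifs
    · exact (hP _ (tsub_le_iff_right.2 hγ)).sin_mul i
    · exact .zero (by positivity)
  refine (hderiv.sub hsin).mono le_rfl (le_of_eq ?_)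
  push_cast [Nat.factorial_succ]
  ring

lemma pderiv'_sum_mul_mderiv_comp_cos {f : (Fin d → ℝ) → ℝ} {i : Fin d} {β : Fin d → ℕ}
    {P : (Fin d → ℕ) → (Fin d → ℝ) → ℝ} (hP : ∀ γ ≤ β, Differentiable ℝ (P γ))
    (hf : ∀ γ ≤ β, Differentiable ℝ (mderiv γ f))
    (hpeel : ∀ γ ≤ β, mderiv (γ + Pi.single i 1) f = pderiv' i (mderiv γ f)) (θ : Fin d → ℝ) :
    pderiv' i (fun θ => ∑ γ ∈ Iic β, P γ θ * mderiv γ f fun j => Real.cos (θ j)) θ =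
      ∑ γ ∈ Iic (β + Pi.single i 1),
        nextCoeff i β P γ θ * mderiv γ f fun j => Real.cos (θ j) := by
  rw [pderiv'_sum (F := fun γ θ => P γ θ * mderiv γ f fun j => Real.cos (θ j)) i
    fun γ hγ => ((hP γ (mem_Iic.1 hγ)) θ).mul
      (((hf γ (mem_Iic.1 hγ)) _).comp θ differentiable_cos_pi.differentiableAt)]
  simp only [nextCoeff, sub_mul, ite_mul, zero_mul]
  rw [sum_Iic_add_single]
  refine sum_congr rfl fun γ hγ => ?_
  rw [pderiv'_mul_comp_cos i ((hP γ (mem_Iic.1 hγ)) θ) ((hf γ (mem_Iic.1 hγ)) _),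
    hpeel γ (mem_Iic.1 hγ), add_tsub_cancel_right]

lemma isTrigPolyNormLE_one : IsTrigPolyNormLE 0 1 fun _ : Fin d → ℝ => (1 : ℝ) := by
  convert isTrigPolyNormLE_trigMonomial (d := d) (D := 0) (p := (0, fun _ => false))
    (mem_trigIndices.2 fun _ => le_rfl) using 1
  ext θ
  simp [trigMonomial, trigAtom]

theorem exists_mderiv_comp_cos_eq_sum {k : ℕ} {f : (Fin d → ℝ) → ℝ} (hf : ContDiff ℝ k f)
    (α : Fin d → ℕ) (hα : mdeg α ≤ k) :
    ∃ P : (Fin d → ℕ) → (Fin d → ℝ) → ℝ,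
      (∀ β ≤ α, IsTrigPolyNormLE (mdeg α) (mdeg α).factorial (P β)) ∧
      ∀ θ, mderiv α (fun t => f fun j => Real.cos (t j)) θ =
        ∑ β ∈ Iic α, P β θ * mderiv β f fun j => Real.cos (θ j) := by
  induction α using mderiv_induction with
  | zero =>
    have hIic : Iic (0 : Fin d → ℕ) = {0} := by
      ext β
      simp [funext_iff]
    refine ⟨fun _ _ => 1, fun β _ => ?_, fun θ => by simp [hIic]⟩
    simpa [mdeg_eq_zero.2 rfl] using isTrigPolyNormLE_one
  | add_single i β hpeel ih =>
    rw [mdeg_add_single] at hα ⊢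
    obtain ⟨P, hP, hsum⟩ := ih (by omega)
    refine ⟨nextCoeff i β P, fun γ hγ => isTrigPolyNormLE_nextCoeff hP hγ, fun θ => ?_⟩
    rw [hpeel β le_rfl, show mderiv β _ = _ from funext hsum]
    exact pderiv'_sum_mul_mderiv_comp_cos (fun γ hγ => (hP γ hγ).differentiable)
      (fun γ hγ => (contDiff_mderiv hf γ (n := 1) (by linarith [mdeg_mono hγ])).differentiable
        one_ne_zero)
      (fun γ hγ => hpeel γ hγ f) θ

theorem chain_rule_with_bounded_trig_coefficients_general
    (d k : ℕ) (f : (Fin d → ℝ) → ℝ) (hf : ContDiff ℝ k f)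
    (α : Fin d → ℕ) (hα : mdeg α ≤ k) :
    ∃ P : (Fin d → ℕ) → (Fin d → ℝ) → ℝ,
      (∀ β ∈ Fintype.piFinset fun i => Finset.range (α i + 1),
        IsTrigPoly d (mdeg α) (P β)) ∧
      (∀ θ : Fin d → ℝ,
        mderiv α (fun t => f (fun i => Real.cos (t i))) θ =
          ∑ β ∈ Fintype.piFinset fun i => Finset.range (α i + 1),
            P β θ * mderiv β f (fun i => Real.cos (θ i))) ∧
      (∀ β ∈ Fintype.piFinset fun i => Finset.range (α i + 1),
        ∀ θ : Fin d → ℝ, (∀ i, θ i ∈ Set.Icc (0 : ℝ) Real.pi) →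
          |P β θ| ≤ (Nat.factorial (mdeg α) : ℝ)) := by
  have hbox : (Fintype.piFinset fun i => range (α i + 1)) = Iic α := by
    ext β; simp [Pi.le_def]
  obtain ⟨P, hP, hsum⟩ := exists_mderiv_comp_cos_eq_sum hf α hα
  rw [hbox]
  exact ⟨P, fun β hβ => (hP β (mem_Iic.1 hβ)).isTrigPoly, hsum,
    fun β hβ θ _ => (hP β (mem_Iic.1 hβ)).abs_le θ⟩

/-- chain rule with bounded trigonometric coefficients: for
`g(θ) = f(cos θ)` and `|α| ≤ k`, `∂_θ^α g = Σ_{β ≤ α} P_{α,β}(θ) (∂_x^β f)(cos θ)`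
where each `P_{α,β}` is a trigonometric polynomial of degree at most `|α|` in every
variable and `sup_{θ ∈ [0,π]^d} |P_{α,β}(θ)| ≤ |α|!`. -/
theorem chain_rule_with_bounded_trig_coefficients
    (d k : ℕ) (hd : 1 ≤ d) (f : (Fin d → ℝ) → ℝ) (hf : ContDiff ℝ k f)
    (α : Fin d → ℕ) (hα : mdeg α ≤ k) :
    ∃ P : (Fin d → ℕ) → (Fin d → ℝ) → ℝ,
      (∀ β ∈ Fintype.piFinset fun i => Finset.range (α i + 1),
        IsTrigPoly d (mdeg α) (P β)) ∧
      (∀ θ : Fin d → ℝ,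
        mderiv α (fun t => f (fun i => Real.cos (t i))) θ =
          ∑ β ∈ Fintype.piFinset fun i => Finset.range (α i + 1),
            P β θ * mderiv β f (fun i => Real.cos (θ i))) ∧
      (∀ β ∈ Fintype.piFinset fun i => Finset.range (α i + 1),
        ∀ θ : Fin d → ℝ, (∀ i, θ i ∈ Set.Icc (0 : ℝ) Real.pi) →
          |P β θ| ≤ (Nat.factorial (mdeg α) : ℝ)) :=
  chain_rule_with_bounded_trig_coefficients_general d k f hf α hα

end
end
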